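/- Let φ = (φ₁,φ₂) : ℝ³ → ℝ² be a C² map and define the force field F : ℝ³ → ℝ³ by Fᵢ = Σⱼ ∂ⱼCᵢⱼ − ½ ∂ᵢ|Dφ|², where C = (Dφ)ᵀ(Dφ) and |Dφ|² = Σ_{a,i}(∂ᵢφₐ)². Then F = (Δφ₁)∇φ₁ + (Δφ₂)∇φ₂ (Δ the componentwise Laplacian), and F is pointwise orthogonal to the associated fluid velocity: ⟨F(x), V(x)⟩ = 0 for all x ∈ ℝ³, where V = ∇φ₁ × ∇φ₂. -/

import Mathlib

open scoped BigOperators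

/-- Partial derivative `∂ⱼ f` of a scalar function on `ℝ³`. -/
noncomputable def pd (j : Fin 3) (f : (Fin 3 → ℝ) → ℝ) (x : Fin 3 → ℝ) : ℝ :=
  fderiv ℝ f x (Pi.single j 1)

/-- Cross product on `ℝ³`. -/
def cross (a b : Fin 3 → ℝ) : Fin 3 → ℝ :=
  ![a 1 * b 2 - a 2 * b 1, a 2 * b 0 - a 0 * b 2, a 0 * b 1 - a 1 * b 0]

/-- Cauchy–Green tensor `Cᵢⱼ = Σₐ ∂ᵢφₐ ∂ⱼφₐ` of a map `φ : ℝ³ → ℝ²`. -/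
noncomputable def CG (φ : Fin 2 → (Fin 3 → ℝ) → ℝ) (i j : Fin 3) (x : Fin 3 → ℝ) : ℝ :=
  ∑ a : Fin 2, pd i (φ a) x * pd j (φ a) x

/-- `|Dφ|² = Σ_{a,i} (∂ᵢφₐ)²`. -/
noncomputable def eDen (φ : Fin 2 → (Fin 3 → ℝ) → ℝ) (x : Fin 3 → ℝ) : ℝ :=
  ∑ a : Fin 2, ∑ i : Fin 3, (pd i (φ a) x) ^ 2

/-- Force field `Fᵢ = Σⱼ ∂ⱼCᵢⱼ − ½ ∂ᵢ|Dφ|²`. -/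
noncomputable def force (φ : Fin 2 → (Fin 3 → ℝ) → ℝ) (i : Fin 3) (x : Fin 3 → ℝ) : ℝ :=
  (∑ j : Fin 3, pd j (fun y => CG φ i j y) x) - (1/2) * pd i (fun y => eDen φ y) x

/-- Fluid velocity `V = ∇φ₁ × ∇φ₂` associated to `φ`. -/
noncomputable def Vfield (φ : Fin 2 → (Fin 3 → ℝ) → ℝ) (x : Fin 3 → ℝ) : Fin 3 → ℝ :=
  cross (fun i => pd i (φ 0) x) (fun i => pd i (φ 1) x)

/-!
For each component `g = φₐ`, the Leibniz rule gives
`Σⱼ ∂ⱼ(∂ᵢg ∂ⱼg) = Σⱼ ∂ⱼ∂ᵢg ∂ⱼg + (Δg) ∂ᵢg`, and by the symmetry of second derivatives the first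
sum is `½ ∂ᵢ|∇g|²`. Hence `F = (Δφ₁)∇φ₁ + (Δφ₂)∇φ₂` lies in the span of `∇φ₁` and `∇φ₂`, both of
which are orthogonal to `V = ∇φ₁ × ∇φ₂`.
-/

open scoped Matrix

section PartialDerivatives

variable {g u v : (Fin 3 → ℝ) → ℝ} {x : Fin 3 → ℝ}

theorem ContDiff.differentiable_pd (hg : ContDiff ℝ 2 g) (i : Fin 3) :
    Differentiable ℝ (pd i g) := fun x =>
  ((hg.fderiv_right (m := 1) (by norm_num)).differentiable one_ne_zero x).clm_apply
    (differentiableAt_const _)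

theorem pd_fun_sum {ι : Type*} {s : Finset ι} {F : ι → (Fin 3 → ℝ) → ℝ}
    (hF : ∀ a ∈ s, DifferentiableAt ℝ (F a) x) (j : Fin 3) :
    pd j (fun y => ∑ a ∈ s, F a y) x = ∑ a ∈ s, pd j (F a) x := by
  simp [pd, fderiv_fun_sum hF]

theorem pd_fun_mul (hu : DifferentiableAt ℝ u x) (hv : DifferentiableAt ℝ v x) (j : Fin 3) :
    pd j (fun y => u y * v y) x = pd j u x * v x + u x * pd j v x := by
  simp only [pd, fderiv_fun_mul hu hv, add_apply, smul_apply, smul_eq_mul]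
  ring

theorem pd_fun_sq (hu : DifferentiableAt ℝ u x) (j : Fin 3) :
    pd j (fun y => u y ^ 2) x = 2 * u x * pd j u x := by
  simp only [sq, pd_fun_mul hu hu]
  ring

theorem pd_pd_eq_fderiv_fderiv (hg : ContDiff ℝ 2 g) (i j : Fin 3) :
    pd j (pd i g) x = fderiv ℝ (fderiv ℝ g) x (Pi.single j 1) (Pi.single i 1) := by
  have hg' : DifferentiableAt ℝ (fderiv ℝ g) x :=
    (hg.fderiv_right (m := 1) (by norm_num)).differentiable one_ne_zero x
  unfold pd
  simp [fderiv_clm_apply hg' (differentiableAt_const _)]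

theorem pd_pd_comm (hg : ContDiff ℝ 2 g) (i j : Fin 3) :
    pd j (pd i g) x = pd i (pd j g) x := by
  rw [pd_pd_eq_fderiv_fderiv hg, pd_pd_eq_fderiv_fderiv hg]
  exact hg.contDiffAt.isSymmSndFDerivAt (by simp) _ _

end PartialDerivatives

theorem sum_pd_pd_mul_pd_sub_half_pd_sum_sq {g : (Fin 3 → ℝ) → ℝ} (hg : ContDiff ℝ 2 g)
    (i : Fin 3) (x : Fin 3 → ℝ) :
    ∑ j, pd j (fun y => pd i g y * pd j g y) x - 1 / 2 * pd i (fun y => ∑ k, pd k g y ^ 2) x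
      = (∑ j, pd j (pd j g) x) * pd i g x := by
  have hdg := hg.differentiable_pd
  have hdiv (j : Fin 3) : pd j (fun y => pd i g y * pd j g y) x
      = pd j (pd i g) x * pd j g x + pd i g x * pd j (pd j g) x :=
    pd_fun_mul (hdg i x) (hdg j x) j
  have hgrad : pd i (fun y => ∑ k, pd k g y ^ 2) x = ∑ k, 2 * pd k g x * pd k (pd i g) x := by
    rw [pd_fun_sum (F := fun k y => pd k g y ^ 2) fun k _ => (hdg k x).pow 2]
    exact Finset.sum_congr rfl fun k _ => by rw [pd_fun_sq (hdg k x), pd_pd_comm hg]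
  rw [Finset.sum_congr rfl fun j _ => hdiv j, hgrad]
  simp only [Fin.sum_univ_three]
  ring

theorem cross_eq_crossProduct (a b : Fin 3 → ℝ) : cross a b = a ⨯₃ b := rfl

theorem add_smul_dotProduct_cross_eq_zero (a b : Fin 3 → ℝ) (s t : ℝ) :
    (s • a + t • b) ⬝ᵥ (a ⨯₃ b) = 0 := by
  simp [add_dotProduct, dot_self_cross, dot_cross_self]

theorem force_eq_sum_laplacian_mul_pd {φ : Fin 2 → (Fin 3 → ℝ) → ℝ} (hφ : ∀ a, ContDiff ℝ 2 (φ a))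
    (x : Fin 3 → ℝ) (i : Fin 3) :
    force φ i x = ∑ a, (∑ j, pd j (pd j (φ a)) x) * pd i (φ a) x := by
  have hdφ a := (hφ a).differentiable_pd
  have hC (j : Fin 3) : pd j (fun y => CG φ i j y) x
      = ∑ a, pd j (fun y => pd i (φ a) y * pd j (φ a) y) x :=
    pd_fun_sum (fun a _ => (hdφ a i x).mul (hdφ a j x)) j
  have hE : pd i (fun y => eDen φ y) x = ∑ a, pd i (fun y => ∑ k, pd k (φ a) y ^ 2) x :=
    pd_fun_sum (fun a _ => DifferentiableAt.fun_sum fun k _ => (hdφ a k x).pow 2) i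
  rw [force, Finset.sum_congr rfl fun j _ => hC j, hE, Finset.sum_comm, Finset.mul_sum,
    ← Finset.sum_sub_distrib]
  exact Finset.sum_congr rfl fun a _ => sum_pd_pd_mul_pd_sub_half_pd_sum_sq (hφ a) i x

/-- for a `C²` map `φ : ℝ³ → ℝ²`, the force `F = div C − ½∇|Dφ|²` satisfies
`F = (Δφ₁)∇φ₁ + (Δφ₂)∇φ₂` and is pointwise orthogonal to `V = ∇φ₁ × ∇φ₂`. -/
theorem stmt9 (φ : Fin 2 → (Fin 3 → ℝ) → ℝ) (hφ : ∀ a, ContDiff ℝ 2 (φ a)) :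
    (∀ (x : Fin 3 → ℝ) (i : Fin 3),
      force φ i x = ∑ a : Fin 2, (∑ j : Fin 3, pd j (fun y => pd j (φ a) y) x) * pd i (φ a) x) ∧
    (∀ x : Fin 3 → ℝ, (∑ i, force φ i x * Vfield φ x i) = 0) := by
  refine ⟨force_eq_sum_laplacian_mul_pd hφ, fun x => ?_⟩
  have hvec : (fun i => force φ i x)
      = ∑ a : Fin 2, (∑ j, pd j (pd j (φ a)) x) • fun i => pd i (φ a) x := by
    ext i
    simp [force_eq_sum_laplacian_mul_pd hφ]
  change (fun i => force φ i x) ⬝ᵥ Vfield φ x = 0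
  rw [hvec, Fin.sum_univ_two, Vfield, cross_eq_crossProduct]
  exact add_smul_dotProduct_cross_eq_zero _ _ _ _
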